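/- arXiv:2604.04126 — 5 statements merged into one kernel-verified Lean document; each statement's English description precedes it below -/
import Mathlib

section
/- Let $n \ge 2$ be an integer and $p$ an odd prime. Let $V \subseteq \mathbb{F}_{p^{2n}}$ be an $\mathbb{F}_p$-subspace of dimension $n$ with $1 \in V$ and $V \ne \mathbb{F}_{p^n}$. Then there exists $v \in V$ such that $v$ does not lie in any proper subfield of $\mathbb{F}_{p^{2n}}$. -/
/-!
Suppose every element of `V` lies in a proper subfield. A proper subfield of `𝔽_{p^{2n}}` has
`p^d` elements with `2d ≤ 2n`, so its elements satisfy `x^{p^d} = x` for some `1 ≤ d ≤ n`.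
If `V ⊄ 𝔽_{p^n}`, then `V ∩ 𝔽_{p^n}` is a proper subgroup of `V`, with at most `p^n / 2`
elements, and the other elements of `V` are roots of some `X^{p^d} - X` with `1 ≤ d < n`, of
which there are at most `∑_{d=1}^{n-1} p^d < p^n / 2` because `p ≥ 3`: too few to fill `V`.
So `V ⊆ 𝔽_{p^n}`, and the two are equal since both have `p^n` elements.
-/

open Finset Polynomial

lemma two_mul_sum_Ico_pow_lt {p : ℕ} (hp : 3 ≤ p) : ∀ n : ℕ, 2 * ∑ e ∈ Ico 1 n, p ^ e < p ^ n
  | 0 => by simp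
  | n + 1 => by
    rcases n.eq_zero_or_pos with rfl | hn
    · simp; omega
    · have hsplit : ∑ e ∈ Ico 1 (n + 1), p ^ e = ∑ e ∈ Ico 1 n, p ^ e + p ^ n :=
        sum_Ico_succ_top hn _
      have := two_mul_sum_Ico_pow_lt hp n
      have := Nat.mul_le_mul_left (p ^ n) hp
      rw [hsplit, pow_succ]
      omega

lemma card_filter_pow_eq_self_le {F : Type*} [Field F] [Fintype F] [DecidableEq F] {q : ℕ}
    (hq : 1 < q) : #{x : F | x ^ q = x} ≤ q := by
  calc #{x : F | x ^ q = x} ≤ (X ^ q - X : F[X]).natDegree :=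
        card_le_degree_of_subset_roots fun x hx => by
          rw [mem_roots (FiniteField.X_pow_card_sub_X_ne_zero F hq)]
          simp_all
    _ = q := FiniteField.X_pow_card_sub_X_natDegree_eq F hq

lemma AddSubgroup.two_mul_card_le_of_lt {G : Type*} [AddGroup G] {H K : AddSubgroup G} [Finite K]
    (h : H < K) : 2 * Nat.card H ≤ Nat.card K := by
  obtain ⟨k, hk⟩ := card_dvd_of_le h.le
  have hk0 : k ≠ 0 := by
    rintro rfl
    exact (Nat.card_pos (α := K)).ne' (by simpa using hk)
  have hk1 : k ≠ 1 := by
    rintro rfl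
    exact h.ne (eq_of_le_of_card_ge h.le (by simp [hk]))
  rw [hk, mul_comm]
  exact Nat.mul_le_mul_left _ (by omega)

lemma Subfield.natCard_sq_le_of_ne_top {F : Type*} [Field F] [Finite F] {K : Subfield F}
    (hK : K ≠ ⊤) : Nat.card K ^ 2 ≤ Nat.card F := by
  obtain ⟨x, hx⟩ : ∃ x, x ∉ K := by simpa [SetLike.ext_iff] using hK
  have hlt : Nat.card K < Nat.card F := Finite.card_subtype_lt hx
  have hK1 : 1 < Nat.card K := Finite.one_lt_card
  have hcard : Nat.card F = Nat.card K ^ Module.finrank K F := Module.natCard_eq_pow_finrank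
  rw [hcard] at hlt ⊢
  have hm : 1 < Module.finrank K F := (Nat.pow_lt_pow_iff_right (by omega)).1 (by simpa using hlt)
  exact Nat.pow_le_pow_right (by omega) hm

lemma Subfield.exists_pow_pow_eq_self_of_ne_top {F : Type*} [Field F] [Fintype F] {p n : ℕ}
    [CharP F p] (hF : Fintype.card F = p ^ (2 * n)) {K : Subfield F} (hK : K ≠ ⊤) :
    ∃ d, 0 < d ∧ d ≤ n ∧ ∀ x ∈ K, x ^ p ^ d = x := by
  have : Fintype K := Fintype.ofFinite K
  obtain ⟨d, hp, hd⟩ := FiniteField.card K p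
  refine ⟨d, d.pos, ?_, fun x hx => congrArg Subtype.val (hd ▸ FiniteField.pow_card (⟨x, hx⟩ : K))⟩
  have := Subfield.natCard_sq_le_of_ne_top hK
  rw [Nat.card_eq_fintype_card, Nat.card_eq_fintype_card, hd, hF, ← pow_mul] at this
  have := (Nat.pow_le_pow_iff_right hp.one_lt).1 this
  omega

lemma AddSubgroup.pow_pow_eq_self_of_forall_mem_subfield {F : Type*} [Field F] [Fintype F]
    {p n : ℕ} [Fact p.Prime] [CharP F p] (hp : 3 ≤ p) (hF : Fintype.card F = p ^ (2 * n))
    {A : AddSubgroup F} (hA : Nat.card A = p ^ n)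
    (hsub : ∀ a ∈ A, ∃ K : Subfield F, K ≠ ⊤ ∧ a ∈ K) {a : F} (ha : a ∈ A) :
    a ^ p ^ n = a := by
  classical
  let W : AddSubgroup F :=
    ((iterateFrobenius F p n).eqLocusField (RingHom.id F)).toAddSubgroup
  suffices A ≤ W from this ha
  by_contra hAW
  have hhalf : 2 * Nat.card ↥(A ⊓ W) ≤ p ^ n := hA ▸ two_mul_card_le_of_lt (inf_lt_left.2 hAW)
  have hcover : ({x | x ∈ A} : Finset F) ⊆
      ({x | x ∈ A ⊓ W} : Finset F) ∪ (Ico 1 n).biUnion fun e => {x | x ^ p ^ e = x} := by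
    intro x hx
    simp only [mem_filter, mem_univ, true_and] at hx
    obtain ⟨K, hK, hxK⟩ := hsub x hx
    obtain ⟨d, hd0, hdn, hKd⟩ := Subfield.exists_pow_pow_eq_self_of_ne_top hF hK
    rcases hdn.lt_or_eq with hdn | rfl
    · exact mem_union_right _ (mem_biUnion.2 ⟨d, mem_Ico.2 ⟨hd0, hdn⟩, by simpa using hKd x hxK⟩)
    · exact mem_union_left _ (by simpa [W, mem_inf] using ⟨hx, hKd x hxK⟩)
  have hcount : p ^ n ≤ Nat.card ↥(A ⊓ W) + ∑ e ∈ Ico 1 n, p ^ e := by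
    simp only [← hA, Nat.card_eq_fintype_card, Fintype.card_subtype]
    calc _ ≤ _ := card_le_card hcover
      _ ≤ _ := card_union_le _ _
      _ ≤ _ := by
        gcongr
        refine card_biUnion_le.trans <| sum_le_sum fun e he => card_filter_pow_eq_self_le ?_
        exact Nat.one_lt_pow (Nat.one_le_iff_ne_zero.1 (mem_Ico.1 he).1) (by omega)
  have := two_mul_sum_Ico_pow_lt hp n
  omega

theorem stmt2_general (n p : ℕ) (hn : 2 ≤ n) (hp : p.Prime) (hodd : Odd p)
    (F : Type*) [Field F] [Fintype F] [Algebra (ZMod p) F]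
    (hF : Fintype.card F = p ^ (2 * n))
    (V : Submodule (ZMod p) F)
    (hdim : Module.finrank (ZMod p) V = n)
    (hV : (V : Set F) ≠ {x : F | x ^ (p ^ n) = x}) :
    ∃ v ∈ V, ∀ K : Subfield F, K ≠ ⊤ → v ∉ K := by
  classical
  have : Fact p.Prime := ⟨hp⟩
  have : CharP F p := charP_of_injective_algebraMap (algebraMap (ZMod p) F).injective p
  have hp3 : 3 ≤ p := by
    have := hp.two_le
    obtain ⟨k, rfl⟩ := hodd
    omega
  have hcardV : Nat.card V = p ^ n := by
    rw [Module.natCard_eq_pow_finrank (K := ZMod p), Nat.card_zmod, hdim]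
  by_contra! hcon
  have hVW : (V : Set F) ⊆ {x | x ^ p ^ n = x} := fun v hv =>
    AddSubgroup.pow_pow_eq_self_of_forall_mem_subfield (A := V.toAddSubgroup) hp3 hF hcardV hcon hv
  refine hV (Set.eq_of_subset_of_ncard_le hVW ?_ (Set.toFinite _))
  rw [Set.ncard_eq_toFinset_card', Set.toFinset_ofPred, ← Nat.card_coe_set_eq,
    SetLike.coe_sort_coe, hcardV]
  exact card_filter_pow_eq_self_le (Nat.one_lt_pow (by omega) (by omega))

theorem stmt2 (n p : ℕ) (hn : 2 ≤ n) (hp : p.Prime) (hodd : Odd p)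
    (F : Type*) [Field F] [Fintype F] [Algebra (ZMod p) F]
    (hF : Fintype.card F = p ^ (2 * n))
    (V : Submodule (ZMod p) F)
    (hdim : Module.finrank (ZMod p) V = n)
    (h1 : (1 : F) ∈ V)
    (hV : (V : Set F) ≠ {x : F | x ^ (p ^ n) = x}) :
    ∃ v ∈ V, ∀ K : Subfield F, K ≠ ⊤ → v ∉ K :=
  stmt2_general n p hn hp hodd F hF V hdim hV
end

section
/- Let $q$ be a prime power with $q \equiv 1 \pmod 4$. In $\mathbb{F}_{25}$, let $u$ be an element with $u^2 = 2$, and let $H = \mathbb{F}_5^* \subseteq \mathbb{F}_{25}^*$. Define $f : \mathbb{F}_{25} \to \mathbb{F}_{25}$ by $f(x) = x + u x^5$. Then for all distinct $x, y \in \mathbb{F}_{25}$, the direction $\frac{f(x) - f(y)}{x - y}$ lies in the set $D = uH \cup (1+u)H \cup (1-u)H$, but $f$ is not of the form $f(x) = a x^{5^j} + b$ for any $a, b \in \mathbb{F}_{25}$ and $j \in \{0, 1\}$. -/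
theorem stmt4 (F : Type*) [Field F] [Fintype F] (hF : Fintype.card F = 25)
    (u : F) (hu : u ^ 2 = 2)
    (H : Set F) (hH : H = {x : F | x ≠ 0 ∧ x ^ 4 = 1})
    (D : Set F)
    (hD : D = {x : F | ∃ h ∈ H, x = u * h} ∪ {x : F | ∃ h ∈ H, x = (1 + u) * h}
            ∪ {x : F | ∃ h ∈ H, x = (1 - u) * h})
    (f : F → F) (hf : ∀ x, f x = x + u * x ^ 5) :
    (∀ x y : F, x ≠ y → (f x - f y) / (x - y) ∈ D) ∧
      ¬ ∃ (a b : F) (j : ℕ), j ≤ 1 ∧ ∀ x, f x = a * x ^ (5 ^ j) + b := by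
  -- characteristic 5
  obtain ⟨p, hp⟩ := CharP.exists F
  haveI := hp
  have hprime : Nat.Prime p := CharP.char_is_prime F p
  obtain ⟨n, _, hcard⟩ := FiniteField.card F p
  have hp5 : p = 5 := by
    have hdvd : p ∣ 25 := by
      rw [hF] at hcard
      exact hcard ▸ dvd_pow_self p n.pos.ne'
    have : p ∣ 5 ^ 2 := by norm_num at hdvd ⊢; exact hdvd
    have := hprime.dvd_of_dvd_pow this
    exact (Nat.prime_dvd_prime_iff_eq hprime (by norm_num)).mp this
  subst hp5
  have h5 : (5 : F) = 0 := by exact_mod_cast CharP.cast_eq_zero F 5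
  have h1 : (1 : F) ≠ 0 := one_ne_zero
  have h2ne : (2 : F) ≠ 0 := by
    intro h
    have : (1 : F) = 0 := by linear_combination h5 - 2 * h
    exact h1 this
  have h3ne : (3 : F) ≠ 0 := by
    intro h
    have : (1 : F) = 0 := by linear_combination 2 * h - h5
    exact h1 this
  have h2pow : (2 : F) ^ 4 = 1 := by linear_combination 3 * h5
  have h3pow : (3 : F) ^ 4 = 1 := by linear_combination 16 * h5
  have h1pow : (1 : F) ^ 4 = 1 := one_pow 4
  -- membership lemma
  have key : ∀ t : F, t ^ 6 = 1 → (1 + u * t) ∈ D := by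
    intro t ht
    have factor : (t - 1) * (t + 1) * (t - (2 + 2 * u)) * (t - (2 - 2 * u)) *
        (t - (3 + 2 * u)) * (t - (3 - 2 * u)) = 0 := by
      have : t ^ 6 - 1 = 0 := by rw [ht]; ring
      linear_combination this + (-16 * u ^ 2 + 20 - 40 * t + 16 * t ^ 2 * u ^ 2 - 12 * t ^ 2
        + 40 * t ^ 3 - 8 * t ^ 4) * hu + (1 - 4 * t - 5 * t ^ 2 + 6 * t ^ 3 + 4 * t ^ 4
        - 2 * t ^ 5) * h5
    rw [hD, hH]
    rcases mul_eq_zero.mp factor with h' | h6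
    · rcases mul_eq_zero.mp h' with h' | h5'
      · rcases mul_eq_zero.mp h' with h' | h4'
        · rcases mul_eq_zero.mp h' with h' | h3'
          · rcases mul_eq_zero.mp h' with h1' | h2'
            · -- t = 1 : (1+u)*1
              left; right
              exact ⟨1, ⟨h1, h1pow⟩, by linear_combination (1 : F) * (sub_eq_zero.mp h1') * u⟩
            · -- t = -1 : (1-u)*1
              right
              refine ⟨1, ⟨h1, h1pow⟩, ?_⟩
              have : t = -1 := by linear_combination h2'
              rw [this]; ring
          · -- t = 2+2u : u*2
            left; left
            refine ⟨2, ⟨h2ne, h2pow⟩, ?_⟩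
            have : t = 2 + 2 * u := by linear_combination h3'
            rw [this]; linear_combination 2 * hu + h5
        · -- t = 2-2u : (1+u)*2
          left; right
          refine ⟨2, ⟨h2ne, h2pow⟩, ?_⟩
          have : t = 2 - 2 * u := by linear_combination h4'
          rw [this]; linear_combination -2 * hu - h5
      · -- t = 3+2u : u*3
        left; left
        refine ⟨3, ⟨h3ne, h3pow⟩, ?_⟩
        have : t = 3 + 2 * u := by linear_combination h5'
        rw [this]; linear_combination 2 * hu + h5
    · -- t = 3-2u : (1-u)*2
      right
      refine ⟨2, ⟨h2ne, h2pow⟩, ?_⟩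
      have : t = 3 - 2 * u := by linear_combination h6
      rw [this]; linear_combination -2 * hu + u * h5 - h5
  constructor
  · intro x y hxy
    have hd : x - y ≠ 0 := sub_ne_zero.mpr hxy
    have hdiff : f x - f y = (x - y) * (1 + u * (x - y) ^ 4) := by
      rw [hf x, hf y]
      linear_combination u * (x ^ 4 * y - 2 * x ^ 3 * y ^ 2 + 2 * x ^ 2 * y ^ 3 - x * y ^ 4) * h5
    rw [hdiff, mul_div_cancel_left₀ _ hd]
    apply key
    have h24 : (x - y) ^ 24 = 1 := by
      have := FiniteField.pow_card_sub_one_eq_one (x - y) hd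
      rwa [hF] at this
    calc ((x - y) ^ 4) ^ 6 = (x - y) ^ 24 := by ring
      _ = 1 := h24
  · rintro ⟨a, b, j, hj, hform⟩
    have hb : b = 0 := by
      have := hform 0
      rw [hf] at this
      have h50 : (5 : ℕ) ^ j ≠ 0 := pow_ne_zero j (by norm_num)
      simpa [zero_pow h50] using this.symm
    subst hb
    have ha : a = 1 + u := by
      have := hform 1
      rw [hf] at this
      simpa using this.symm
    subst ha
    interval_cases j
    · -- j = 0 : x + u x^5 = (1+u) x, at x = u : contradiction
      have := hform u
      rw [hf] at this
      simp only [pow_zero, pow_one] at this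
      -- u + u * u^5 = (1+u)*u → u^6 = u^2 → 3 = 2 → 1 = 0
      have hcon : (1 : F) = 0 := by linear_combination this - (u ^ 4 + 2 * u ^ 2 + 3) * hu - h5
      exact h1 hcon
    · -- j = 1 : x + u x^5 = (1+u) x^5, at x = u
      have := hform u
      rw [hf] at this
      norm_num at this
      -- u + u^6 = (1+u) u^5 → u + 8 = 4u + 4u^2 → u + 8 = 4u + 8 → 3u = 0 → u = 0 → 2 = 0
      have hu0 : u = 0 := by linear_combination 3 * this + 3 * (u ^ 3 + 2 * u) * hu + 2 * u * h5
      rw [hu0] at hu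
      exact h2ne (by linear_combination -hu)
end

section
/- Let $p$ be a prime, $q = p^n$, and let $D \subseteq \mathbb{F}_q^*$. Let $f : \mathbb{F}_q \to \mathbb{F}_q$ be an additive function (i.e., $f(x+y) = f(x) + f(y)$ for all $x, y$) with $f(1) = 1$, whose direction set $\mathcal{D}_f = \{(f(x)-f(y))/(x-y) : x \ne y\}$ satisfies $\mathcal{D}_f \cdot \mathcal{D}_f^{-1} \subseteq H \cup L$, where $H$ is a subgroup of $\mathbb{F}_q^*$ and $L = \{x^{p-1} : x \in \mathbb{F}_q^*\}$. Then $\mathcal{D}_f \subseteq H$ or $\mathcal{D}_f \subseteq L$. -/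
theorem stmt7 (p n : ℕ) (hp : p.Prime) (hn : 1 ≤ n)
    (F : Type*) [Field F] [Fintype F] (hF : Fintype.card F = p ^ n)
    (H : Subgroup Fˣ)
    (f : F → F) (hadd : ∀ x y : F, f (x + y) = f x + f y) (hf1 : f 1 = 1)
    (Df : Set F) (hDf : Df = {z : F | ∃ x y : F, x ≠ y ∧ z = (f x - f y) / (x - y)})
    (L : Set F) (hL : L = {z : F | ∃ x : F, x ≠ 0 ∧ z = x ^ (p - 1)})
    (Hs : Set F) (hHs : Hs = {z : F | ∃ h : Fˣ, h ∈ H ∧ z = (h : F)})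
    (hsub : ∀ a ∈ Df, ∀ b ∈ Df, a / b ∈ Hs ∪ L) :
    Df ⊆ Hs ∨ Df ⊆ L := by
  have hf0 : f 0 = 0 := by
    have h := hadd 0 0
    rw [add_zero] at h
    exact left_eq_add.mp h
  have h1Df : (1 : F) ∈ Df := by
    rw [hDf]
    exact ⟨1, 0, one_ne_zero, by simp [hf0, hf1]⟩
  -- every element of Df is in Hs ∪ L, and nonzero
  have hmem : ∀ b ∈ Df, b ∈ Hs ∪ L := by
    intro b hb
    have := hsub b hb 1 h1Df
    rwa [div_one] at this
  have hne : ∀ b ∈ Df, b ≠ 0 := by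
    intro b hb hb0
    rcases hmem b hb with h | h
    · rw [hHs] at h
      obtain ⟨u, _, hu⟩ := h
      exact u.ne_zero (by rw [← hu, hb0])
    · rw [hL] at h
      obtain ⟨x, hx, hxe⟩ := h
      exact pow_ne_zero _ hx (by rw [← hxe, hb0])
  by_cases hDL : Df ⊆ L
  · exact Or.inr hDL
  · left
    obtain ⟨a, haD, haL⟩ := Set.not_subset.mp hDL
    have haH : a ∈ Hs := (hmem a haD).resolve_right haL
    intro b hbD
    rcases hmem b hbD with hbH | hbL
    · exact hbH
    · -- b ∈ L; consider a / b
      have hb0 : b ≠ 0 := hne b hbD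
      have ha0 : a ≠ 0 := hne a haD
      rcases hsub a haD b hbD with habH | habL
      · -- a ∈ Hs and a/b ∈ Hs imply b ∈ Hs
        rw [hHs] at haH habH ⊢
        obtain ⟨h1, hh1, he1⟩ := haH
        obtain ⟨h2, hh2, he2⟩ := habH
        refine ⟨h2⁻¹ * h1, H.mul_mem (H.inv_mem hh2) hh1, ?_⟩
        have : (h2 : F) ≠ 0 := h2.ne_zero
        push_cast
        rw [← he1, ← he2]
        field_simp
      · -- a / b ∈ L and b ∈ L imply a ∈ L, contradiction
        exfalso
        rw [hL] at habL hbL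
        obtain ⟨x, hx, hxe⟩ := habL
        obtain ⟨y, hy, hye⟩ := hbL
        apply haL
        rw [hL]
        refine ⟨x * y, mul_ne_zero hx hy, ?_⟩
        rw [mul_pow, ← hxe, ← hye, div_mul_cancel₀ a hb0]
end

section
/- Let $q$ be a prime power, let $S \subseteq \mathbb{F}_{q^2}^*$ be a union of cosets of $\mathbb{F}_q^*$ with $\mathbb{F}_q^* \subseteq S$, and let $v \in \mathbb{F}_{q^2}^* \setminus S$. Suppose $A \subseteq \mathbb{F}_{q^2}$ satisfies $A - A \subseteq S \cup \{0\}$ and $|A| = q$. Then, writing each element of $\mathbb{F}_{q^2}$ uniquely as $a + bv$ with $a, b \in \mathbb{F}_q$, the set $A$ is the graph of a function: there exists $f : \mathbb{F}_q \to \mathbb{F}_q$ such that $A = \{x + f(x) v : x \in \mathbb{F}_q\}$. -/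
/-!
Inside `F` with `|F| = q ^ 2`, the fixed points `K` of `x ↦ x ^ q` form a subfield with `q`
elements, and since `v ∉ K` every element of `F` is `x + c * v` for unique `x, c ∈ K`.
Two points of `A` with the same first coordinate differ by `c * v` with `c ∈ K`; if `c ≠ 0`,
this difference lies in `S` and multiplying by `c⁻¹` would put `v` in `S`. So the first
coordinate is injective on `A`, hence bijective onto `K` as `|A| = q`, and `A` is a graph.
-/

section FrobeniusFixedField

open Polynomial

variable (F : Type*) [Field F] (p n : ℕ)

def frobeniusFixedField [ExpChar F p] : Subfield F :=
  (iterateFrobenius F p n).eqLocusField (RingHom.id F)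

variable {F p n}

theorem mem_frobeniusFixedField [ExpChar F p] {x : F} : x ∈ frobeniusFixedField F p n ↔ x ^ p ^ n = x := by
  rw [frobeniusFixedField, RingHom.mem_eqLocusField, iterateFrobenius_def, RingHom.id_apply]

theorem natCard_frobeniusFixedField [Fact p.Prime] [CharP F p] [Fintype F] (hn : n ≠ 0) (hF : Fintype.card F = (p ^ n) ^ 2) :
    Nat.card (frobeniusFixedField F p n) = p ^ n := by
  set q := p ^ n
  have hq : 1 < q := Nat.one_lt_pow hn (Fact.out : p.Prime).one_lt
  set P : F[X] := X ^ q - X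
  have hP : P ≠ 0 := FiniteField.X_pow_card_sub_X_ne_zero F hq
  have hsplit : (X ^ Fintype.card F - X : F[X]).Splits := by
    rw [splits_iff_card_roots, FiniteField.roots_X_pow_card_sub_X,
      FiniteField.X_pow_card_sub_X_natDegree_eq F Fintype.one_lt_card]
    rfl
  -- `X ^ q ^ 2 - X = P ^ q + P`, as `q`-th powers are additive
  have hdvd : P ∣ X ^ Fintype.card F - X :=
    ⟨P ^ (q - 1) + 1, by
      rw [hF, mul_add, mul_one, ← pow_succ', Nat.sub_add_cancel hq.le, sub_pow_char_pow]
      ring⟩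
  have hroots : (frobeniusFixedField F p n : Set F) = P.rootSet F := by
    ext x
    simp [mem_rootSet, hP, mem_frobeniusFixedField, sub_eq_zero, P, q]
  rw [← SetLike.coe_sort_coe, hroots, Nat.card_eq_fintype_card,
    card_rootSet_eq_natDegree (galois_poly_separable p q (dvd_pow_self p hn)),
    FiniteField.X_pow_card_sub_X_natDegree_eq F hq]
  rw [Algebra.algebraMap_self, map_id]
  exact hsplit.of_dvd (FiniteField.X_pow_card_sub_X_ne_zero F Fintype.one_lt_card) hdvd

end FrobeniusFixedField

theorem Equiv.exists_eq_range_of_injOn_fst {α β γ : Type*} [Finite α] (e : α × β ≃ γ)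
    {A : Set γ} (hinj : A.InjOn fun a => (e.symm a).1) (hcard : A.ncard = Nat.card α) :
    ∃ f : α → β, A = Set.range fun x => e (x, f x) := by
  have himage : (fun a => (e.symm a).1) '' A = .univ :=
    Set.eq_of_subset_of_ncard_le (Set.subset_univ _)
      (by rw [Set.ncard_univ, hinj.ncard_image, hcard])
  choose g hgA hg using fun x => himage.symm ▸ Set.mem_univ x
  have hgraph (x : α) : e (x, (e.symm (g x)).2) = g x :=
    (e.symm_apply_eq.mp (Prod.ext (hg x) rfl : e.symm (g x) = (x, _))).symm
  refine ⟨fun x => (e.symm (g x)).2, Set.ext fun y => ⟨fun hy => ?_, ?_⟩⟩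
  · exact ⟨(e.symm y).1, by dsimp only; rw [hgraph]; exact hinj (hgA _) hy (hg _)⟩
  · rintro ⟨x, rfl⟩
    dsimp only
    rw [hgraph]
    exact hgA x

namespace Subfield

variable {F : Type*} [Field F] (K : Subfield F) {v : F}

theorem add_mul_injective (hv : v ∉ K) :
    Function.Injective fun z : K × K => (z.1 : F) + z.2 * v := by
  rintro ⟨⟨x, hx⟩, ⟨c, hc⟩⟩ ⟨⟨x', hx'⟩, ⟨c', hc'⟩⟩ h
  simp only at h
  obtain rfl : c = c' := by
    by_contra hcc
    have hv' : v = (x - x') / (c' - c) := by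
      rw [eq_div_iff (sub_ne_zero.mpr (Ne.symm hcc))]
      linear_combination -h
    exact hv (hv' ▸ K.div_mem (K.sub_mem hx hx') (K.sub_mem hc' hc))
  obtain rfl : x = x' := by linear_combination h
  rfl

theorem add_mul_bijective [Finite F] (hv : v ∉ K) (hcard : Nat.card F = Nat.card K ^ 2) :
    Function.Bijective fun z : K × K => (z.1 : F) + z.2 * v :=
  (K.add_mul_injective hv).bijective_of_nat_card_le (by rw [Nat.card_prod, hcard, sq])

theorem eq_of_sub_eq_mul {S : Set F} (hS : ∀ s ∈ S, ∀ c ∈ K, c ≠ 0 → s * c ∈ S) (hvS : v ∉ S)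
    {a b c : F} (hab : a - b ∈ S ∪ {0}) (hc : c ∈ K) (h : a - b = c * v) : a = b := by
  rw [← sub_eq_zero, h]
  by_contra hcv
  have hc0 : c ≠ 0 := left_ne_zero_of_mul hcv
  have hS' := hS _ (hab.resolve_right (h ▸ hcv)) c⁻¹ (K.inv_mem hc) (inv_ne_zero hc0)
  rw [h, mul_comm c, mul_inv_cancel_right₀ hc0] at hS'
  exact hvS hS'

theorem exists_eq_setOf_add_mul [Finite F] (hcard : Nat.card F = Nat.card K ^ 2) (hvK : v ∉ K)
    {S : Set F} (hS : ∀ s ∈ S, ∀ c ∈ K, c ≠ 0 → s * c ∈ S) (hvS : v ∉ S)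
    {A : Set F} (hA : ∀ a ∈ A, ∀ b ∈ A, a - b ∈ S ∪ {0}) (hAcard : A.ncard = Nat.card K) :
    ∃ f : F → F, (∀ x ∈ K, f x ∈ K) ∧ A = {y | ∃ x ∈ K, y = x + f x * v} := by
  classical
  set e := Equiv.ofBijective _ (K.add_mul_bijective hvK hcard)
  have hinj : A.InjOn fun a => (e.symm a).1 := by
    intro a ha b hb hab
    refine K.eq_of_sub_eq_mul hS hvS (hA a ha b hb) (K.sub_mem (e.symm a).2.2 (e.symm b).2.2) ?_
    conv_lhs => rw [← e.apply_symm_apply a, ← e.apply_symm_apply b]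
    simp only [e, Equiv.ofBijective_apply, hab]
    ring
  obtain ⟨g, rfl⟩ := e.exists_eq_range_of_injOn_fst hinj hAcard
  refine ⟨fun x => if hx : x ∈ K then g ⟨x, hx⟩ else 0, fun x hx => by simp [hx], ?_⟩
  ext y
  constructor
  · rintro ⟨x, rfl⟩
    exact ⟨x, x.2, by simp [e]⟩
  · rintro ⟨x, hx, rfl⟩
    exact ⟨⟨x, hx⟩, by simp [e, hx]⟩

end Subfield

theorem stmt11_general (p n q : ℕ) (hp : p.Prime) (hn : 1 ≤ n) (hq : q = p ^ n)
    (F : Type*) [Field F] [Fintype F] (hF : Fintype.card F = q ^ 2)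
    (S : Set F)
    (hScoset : ∀ s ∈ S, ∀ c : F, c ≠ 0 → c ^ q = c → s * c ∈ S)
    (hSq : ∀ x : F, x ≠ 0 → x ^ q = x → x ∈ S)
    (v : F) (hv0 : v ≠ 0) (hvS : v ∉ S)
    (A : Set F) (hA : ∀ a ∈ A, ∀ b ∈ A, a - b ∈ S ∪ {0})
    (hAcard : A.ncard = q) :
    ∃ f : F → F, (∀ x : F, x ^ q = x → (f x) ^ q = f x) ∧
      A = {y : F | ∃ x : F, x ^ q = x ∧ y = x + f x * v} := by
  subst hq
  have : Fact p.Prime := ⟨hp⟩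
  have : CharP F p := charP_of_card_eq_prime_pow (f := n * 2) (by rw [hF, pow_mul])
  let K := frobeniusFixedField F p n
  have hK : Nat.card K = p ^ n := natCard_frobeniusFixedField (by omega) hF
  have hvK : v ∉ K := fun h => hvS (hSq v hv0 (mem_frobeniusFixedField.mp h))
  obtain ⟨f, hfK, rfl⟩ := K.exists_eq_setOf_add_mul (by rw [Nat.card_eq_fintype_card, hF, hK]) hvK
    (fun s hs c hc hc0 => hScoset s hs c hc0 (mem_frobeniusFixedField.mp hc)) hvS hA
    (hK ▸ hAcard)
  refine ⟨f, fun x hx => mem_frobeniusFixedField.mp (hfK x (mem_frobeniusFixedField.mpr hx)), ?_⟩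
  simp only [K, mem_frobeniusFixedField]

theorem stmt11 (p n q : ℕ) (hp : p.Prime) (hn : 1 ≤ n) (hq : q = p ^ n)
    (F : Type*) [Field F] [Fintype F] (hF : Fintype.card F = q ^ 2)
    (S : Set F) (hS0 : (0 : F) ∉ S)
    (hScoset : ∀ s ∈ S, ∀ c : F, c ≠ 0 → c ^ q = c → s * c ∈ S)
    (hSq : ∀ x : F, x ≠ 0 → x ^ q = x → x ∈ S)
    (v : F) (hv0 : v ≠ 0) (hvS : v ∉ S)
    (A : Set F) (hA : ∀ a ∈ A, ∀ b ∈ A, a - b ∈ S ∪ {0})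
    (hAcard : A.ncard = q) :
    ∃ f : F → F, (∀ x : F, x ^ q = x → (f x) ^ q = f x) ∧
      A = {y : F | ∃ x : F, x ^ q = x ∧ y = x + f x * v} :=
  stmt11_general p n q hp hn hq F hF S hScoset hSq v hv0 hvS A hA hAcard
end

section
/- Let $p$ be a prime, $n \ge 1$, $q = p^n$, let $d \ge 2$ divide $q - 1$, and let $r \in \{1, \ldots, d-1\}$. Suppose $\chi$ is a multiplicative character of $\mathbb{F}_q$ of order $d$, and suppose $t : \mathbb{F}_p \to \mathbb{F}_q^*$ is a function such that for each $j \in \{1, \ldots, d-1\}$, $\left| \sum_{\lambda \in \mathbb{F}_p} \chi^j(t(\lambda)) \right| \le C\sqrt{p}$ for some constant $C > 0$, and such that $t(\lambda) \in D$ for all $\lambda \in \mathbb{F}_p$, where $D$ is a union of $r$ cosets of the index-$d$ subgroup $H = \ker \chi$ of $\mathbb{F}_q^*$. Then $p < \frac{C^2 r d^2}{(d - r)^2}$. -/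
/-!
Let `ζ` be a primitive `d`-th root of unity and `c j = ∑ₖ ζ^(-j mₖ)`. By orthogonality of the
characters of `ℤ/d`, `∑_{j<d} c j z^j = d` for every `z = ζ^(mₖ)`, so summing over the `p` values
`z = χ(t λ)` gives `∑_{j<d} c j Sⱼ = d p`, where `Sⱼ = ∑_λ χ(t λ)^j`. The term `j = 0` is `r p`,
hence `(d - r) p ≤ (∑_{0<j<d} |c j|) C √p`. Parseval gives `∑_j |c j|² = d r`, so by
Cauchy–Schwarz `∑_j |c j| ≤ d √r`, and `(d - r) p ≤ (d √r - r) C √p < d √r C √p`.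
-/

open Finset Complex
open scoped ComplexConjugate

section Orthogonality

variable {K : Type*} [Field K] {d : ℕ}

theorem geom_sum_eq_ite_of_pow_eq_one [DecidableEq K] {w : K} (hw : w ^ d = 1) :
    ∑ j ∈ range d, w ^ j = if w = 1 then (d : K) else 0 := by
  split_ifs with h
  · simp [h]
  · rw [geom_sum_eq h, hw, sub_self, zero_div]

theorem IsPrimitiveRoot.sum_inv_pow_mul_pow_pow {ζ : K} (hζ : IsPrimitiveRoot ζ d) {a b : ℕ}
    (ha : a < d) (hb : b < d) :
    ∑ j ∈ range d, ((ζ ^ a)⁻¹ * ζ ^ b) ^ j = if a = b then (d : K) else 0 := by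
  classical
  have hζa : ζ ^ a ≠ 0 := pow_ne_zero a (hζ.ne_zero (by omega))
  have hw : ((ζ ^ a)⁻¹ * ζ ^ b) ^ d = 1 := by
    rw [mul_pow, inv_pow, ← pow_mul, ← pow_mul, pow_mul', pow_mul', hζ.pow_eq_one]
    simp
  rw [geom_sum_eq_ite_of_pow_eq_one hw]
  exact if_congr ((inv_mul_eq_one₀ hζa).trans ⟨hζ.pow_inj ha hb, fun h ↦ h ▸ rfl⟩) rfl rfl

end Orthogonality

/-- The coefficients `c j` of `d • 1_D = ∑_{j<d} c j χ^j`, where `D = ⋃ₖ g^(m k) H` and `ζ = χ g`. -/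
def indicatorCoeff {K κ : Type*} [Field K] [Fintype κ] (ζ : K) (m : κ → ℕ) (j : ℕ) : K :=
  ∑ k, (ζ ^ m k)⁻¹ ^ j

section IndicatorCoeff

variable {K κ : Type*} [Field K] [Fintype κ] {d : ℕ} {ζ : K} {m : κ → ℕ}

@[simp]
theorem indicatorCoeff_zero : indicatorCoeff ζ m 0 = Fintype.card κ := by
  simp [indicatorCoeff]

theorem sum_indicatorCoeff_mul_pow (hζ : IsPrimitiveRoot ζ d) (hm : Function.Injective m)
    (hmlt : ∀ k, m k < d) (k₀ : κ) :
    ∑ j ∈ range d, indicatorCoeff ζ m j * (ζ ^ m k₀) ^ j = d := by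
  classical
  simp only [indicatorCoeff, sum_mul, ← mul_pow]
  rw [sum_comm]
  simp [hζ.sum_inv_pow_mul_pow_pow (hmlt _) (hmlt k₀), hm.eq_iff]

theorem sum_Ico_indicatorCoeff_mul_sum_pow {ι : Type*} [Fintype ι] (hζ : IsPrimitiveRoot ζ d)
    (hd : 0 < d) (hm : Function.Injective m) (hmlt : ∀ k, m k < d) {z : ι → K}
    (hz : ∀ i, ∃ k, z i = ζ ^ m k) :
    ∑ j ∈ Ico 1 d, indicatorCoeff ζ m j * ∑ i, z i ^ j
      = ((d : K) - Fintype.card κ) * Fintype.card ι := by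
  have hfull : ∑ j ∈ range d, indicatorCoeff ζ m j * ∑ i, z i ^ j = d * Fintype.card ι := by
    choose k hk using hz
    simp only [mul_sum]
    rw [sum_comm]
    simp [hk, sum_indicatorCoeff_mul_pow hζ hm hmlt, mul_comm]
  rw [range_eq_Ico, sum_eq_sum_Ico_succ_bot hd] at hfull
  simp only [indicatorCoeff_zero, pow_zero, sum_const, card_univ, nsmul_eq_mul, mul_one,
    zero_add] at hfull
  linear_combination hfull

end IndicatorCoeff

section Parseval

variable {κ : Type*} [Fintype κ] {d : ℕ} {ζ : ℂ} {m : κ → ℕ}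

theorem IsPrimitiveRoot.conj_indicatorCoeff (hζ : IsPrimitiveRoot ζ d) (hd : 0 < d) (j : ℕ) :
    conj (indicatorCoeff ζ m j) = ∑ k, (ζ ^ m k) ^ j := by
  have hnorm : ∀ k, ‖ζ ^ m k‖ = 1 := fun k ↦ by
    rw [norm_pow, norm_eq_one_of_pow_eq_one hζ.pow_eq_one hd.ne', one_pow]
  simp [indicatorCoeff, inv_eq_conj (hnorm _)]

theorem sum_norm_sq_indicatorCoeff (hζ : IsPrimitiveRoot ζ d) (hd : 0 < d)
    (hm : Function.Injective m) (hmlt : ∀ k, m k < d) :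
    ∑ j ∈ range d, ‖indicatorCoeff ζ m j‖ ^ 2 = d * Fintype.card κ := by
  have : ∑ j ∈ range d, indicatorCoeff ζ m j * conj (indicatorCoeff ζ m j)
      = d * Fintype.card κ := by
    simp only [hζ.conj_indicatorCoeff hd, mul_sum]
    rw [sum_comm]
    simp [sum_indicatorCoeff_mul_pow hζ hm hmlt, mul_comm]
  simp only [mul_conj, normSq_eq_norm_sq] at this
  exact_mod_cast this

theorem sum_norm_indicatorCoeff_le (hζ : IsPrimitiveRoot ζ d) (hd : 0 < d)
    (hm : Function.Injective m) (hmlt : ∀ k, m k < d) :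
    ∑ j ∈ range d, ‖indicatorCoeff ζ m j‖ ≤ d * √(Fintype.card κ) := by
  have hCS := sq_sum_le_card_mul_sum_sq (s := range d) (f := fun j ↦ ‖indicatorCoeff ζ m j‖)
  rw [sum_norm_sq_indicatorCoeff hζ hd hm hmlt, card_range] at hCS
  rw [← Real.sqrt_sq (Nat.cast_nonneg d), ← Real.sqrt_mul (sq_nonneg _),
    Real.le_sqrt (sum_nonneg fun _ _ ↦ norm_nonneg _) (by positivity)]
  linarith

end Parseval

theorem sub_mul_card_le_of_norm_sum_pow_le {κ ι : Type*} [Fintype κ] [Fintype ι] {d : ℕ}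
    {ζ : ℂ} (hζ : IsPrimitiveRoot ζ d) (hd : 0 < d) {m : κ → ℕ} (hm : Function.Injective m)
    (hmlt : ∀ k, m k < d) {z : ι → ℂ} (hz : ∀ i, ∃ k, z i = ζ ^ m k) {B : ℝ} (hB₀ : 0 ≤ B)
    (hB : ∀ j : ℕ, 1 ≤ j → j ≤ d - 1 → ‖∑ i, z i ^ j‖ ≤ B) :
    ((d : ℝ) - Fintype.card κ) * Fintype.card ι
      ≤ (d * √(Fintype.card κ) - Fintype.card κ) * B := by
  have hIco : ∑ j ∈ Ico 1 d, ‖indicatorCoeff ζ m j‖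
      = ∑ j ∈ range d, ‖indicatorCoeff ζ m j‖ - Fintype.card κ := by
    rw [range_eq_Ico, sum_eq_sum_Ico_succ_bot hd, indicatorCoeff_zero]
    simp
  calc ((d : ℝ) - Fintype.card κ) * Fintype.card ι
      ≤ ‖((d : ℂ) - Fintype.card κ) * Fintype.card ι‖ := by
        rw [show ((d : ℂ) - Fintype.card κ) * Fintype.card ι
          = (((d : ℝ) - Fintype.card κ) * Fintype.card ι : ℝ) by push_cast; ring, norm_real]
        exact Real.le_norm_self _
    _ = ‖∑ j ∈ Ico 1 d, indicatorCoeff ζ m j * ∑ i, z i ^ j‖ := by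
        rw [sum_Ico_indicatorCoeff_mul_sum_pow hζ hd hm hmlt hz]
    _ ≤ ∑ j ∈ Ico 1 d, ‖indicatorCoeff ζ m j‖ * B := by
        refine (norm_sum_le _ _).trans (sum_le_sum fun j hj ↦ ?_)
        rw [norm_mul]
        have hj := mem_Ico.mp hj
        exact mul_le_mul_of_nonneg_left (hB j hj.1 (by omega)) (norm_nonneg _)
    _ ≤ (d * √(Fintype.card κ) - Fintype.card κ) * B := by
        rw [← sum_mul, hIco]
        gcongr
        exact sum_norm_indicatorCoeff_le hζ hd hm hmlt

theorem lt_of_sub_mul_le_sub_mul_sqrt {p r d C : ℝ} (hp : 0 < p) (hr : 0 < r) (hrd : r < d)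
    (hC : 0 < C) (h : (d - r) * p ≤ (d * √r - r) * (C * √p)) :
    p < C ^ 2 * r * d ^ 2 / (d - r) ^ 2 := by
  have hsp := Real.sqrt_pos.mpr hp
  have hlt : (d - r) * √p < C * d * √r := by
    refine lt_of_mul_lt_mul_right ?_ hsp.le
    nlinarith [Real.mul_self_sqrt hp.le, mul_pos hC hsp]
  have hsq := pow_lt_pow_left₀ hlt (by nlinarith) two_ne_zero
  rw [mul_pow, mul_pow, mul_pow, Real.sq_sqrt hp.le, Real.sq_sqrt hr.le] at hsq
  rw [lt_div_iff₀ (by nlinarith)]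
  linarith

theorem stmt17_general (p d r : ℕ) [Fact p.Prime]
    (hr1 : 1 ≤ r) (hrd : r ≤ d - 1)
    (F : Type*) [Field F]
    (χ : MulChar F ℂ)
    (m : Fin r → ℕ) (hminj : Function.Injective m) (hmlt : ∀ k, m k < d)
    (C : ℝ) (hC : 0 < C)
    (t : ZMod p → F)
    (htD : ∀ l : ZMod p, ∃ k : Fin r,
      χ (t l) = (Complex.exp (2 * (Real.pi : ℂ) * Complex.I / d)) ^ (m k))
    (hbound : ∀ j : ℕ, 1 ≤ j → j ≤ d - 1 →
      ‖∑ l : ZMod p, (χ (t l)) ^ j‖ ≤ C * Real.sqrt p) :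
    (p : ℝ) < C ^ 2 * r * d ^ 2 / ((d : ℝ) - r) ^ 2 := by
  have hd₀ : 0 < d := by omega
  have hζ := isPrimitiveRoot_exp d hd₀.ne'
  have key := sub_mul_card_le_of_norm_sum_pow_le hζ hd₀ hminj hmlt htD (by positivity) hbound
  rw [Fintype.card_fin, ZMod.card] at key
  exact lt_of_sub_mul_le_sub_mul_sqrt (by exact_mod_cast (Fact.out : p.Prime).pos)
    (by exact_mod_cast hr1) (by exact_mod_cast (by omega : r < d)) hC key

theorem stmt17 (p n q d r : ℕ) [Fact p.Prime] (hn : 1 ≤ n) (hq : q = p ^ n)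
    (hd : 2 ≤ d) (hdq : d ∣ q - 1) (hr1 : 1 ≤ r) (hrd : r ≤ d - 1)
    (F : Type*) [Field F] [Fintype F] (hF : Fintype.card F = q)
    (χ : MulChar F ℂ) (hχord : orderOf χ = d)
    (g : Fˣ) (hg : ∀ x : Fˣ, x ∈ Subgroup.zpowers g)
    (hχg : χ g = Complex.exp (2 * (Real.pi : ℂ) * Complex.I / d))
    (m : Fin r → ℕ) (hminj : Function.Injective m) (hmlt : ∀ k, m k < d)
    (C : ℝ) (hC : 0 < C)
    (t : ZMod p → F) (ht0 : ∀ l : ZMod p, t l ≠ 0)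
    (htD : ∀ l : ZMod p, ∃ k : Fin r,
      χ (t l) = (Complex.exp (2 * (Real.pi : ℂ) * Complex.I / d)) ^ (m k))
    (hbound : ∀ j : ℕ, 1 ≤ j → j ≤ d - 1 →
      ‖∑ l : ZMod p, (χ (t l)) ^ j‖ ≤ C * Real.sqrt p) :
    (p : ℝ) < C ^ 2 * r * d ^ 2 / ((d : ℝ) - r) ^ 2 :=
  stmt17_general p d r hr1 hrd F χ m hminj hmlt C hC t htD hbound
end
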